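/- arXiv:1802.00042 — 8 statements merged into one kernel-verified Lean document; each statement's English description precedes it below -/
import Mathlib

section
/- Let n be a product of distinct primes with index set I, and for S, T ⊆ I define U_S as above. Then U_S · U_T ⊆ U_{S∩T}; that is, the product of an element of U_S and an element of U_T (multiplication mod n) lies in U_{S∩T}. -/
/-!
Writing `P A = ∏ i ∈ A, p i`, an element of `U_S` is exactly a residue `P Sᶜ * w` with `w` coprime
to `P S` (for `S = ∅` this is `n * w = 0`). Since `P Sᶜ * P Tᶜ = P (S ∩ T)ᶜ * P (S ∪ T)ᶜ`, a product
of such residues is `P (S ∩ T)ᶜ * (P (S ∪ T)ᶜ * u * v)`, and the second factor is coprime to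
`P (S ∩ T)`: `u` and `v` are, and `(S ∪ T)ᶜ` is disjoint from `S ∩ T` while the primes are distinct.
-/

open Finset in
/-- `U_S ⊆ ZMod n`: `{0}` if `S = ∅`, else `{ n_{I∖S}·x : x ∈ U_{n_S} }`. -/
def USet (m : ℕ) (p : Fin m → ℕ) (n : ℕ) (S : Finset (Fin m)) : Set (ZMod n) :=
  if S = ∅ then {0}
  else {y : ZMod n | ∃ x : (ZMod (∏ i ∈ S, p i))ˣ,
    y = ((∏ i ∈ Sᶜ, p i : ℕ) : ZMod n) * (((x : ZMod (∏ i ∈ S, p i)).val : ℕ) : ZMod n)}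

open Finset

theorem Nat.coprime_prod_of_disjoint {ι : Type*} {p : ι → ℕ} (hp : ∀ i, (p i).Prime)
    (hinj : Function.Injective p) {A B : Finset ι} (hAB : Disjoint A B) :
    Nat.Coprime (∏ i ∈ A, p i) (∏ j ∈ B, p j) :=
  Nat.Coprime.prod_left fun i hi => Nat.Coprime.prod_right fun j hj =>
    (Nat.coprime_primes (hp i) (hp j)).mpr
      (hinj.ne fun hij => disjoint_left.mp hAB hi (hij ▸ hj))

theorem mem_USet_iff {m : ℕ} {p : Fin m → ℕ} {n : ℕ} (hn : n = ∏ i, p i)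
    (S : Finset (Fin m)) (a : ZMod n) :
    a ∈ USet m p n S ↔
      ∃ w : ℕ, w.Coprime (∏ i ∈ S, p i) ∧ a = ((∏ i ∈ Sᶜ, p i) * w : ℕ) := by
  by_cases hS : S = ∅
  · subst hS
    have hzero (w : ℕ) : (((∏ i ∈ ∅ᶜ, p i) * w : ℕ) : ZMod n) = 0 := by
      rw [compl_empty, ← hn, Nat.cast_mul, ZMod.natCast_self, zero_mul]
    simp only [USet, ↓reduceIte, Set.mem_singleton_iff, hzero]
    exact ⟨fun ha => ⟨1, Nat.coprime_one_left _, ha⟩, fun ⟨_, _, ha⟩ => ha⟩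
  simp only [USet, if_neg hS, Set.mem_ofPred_eq]
  constructor
  · rintro ⟨x, rfl⟩
    exact ⟨_, ZMod.val_coe_unit_coprime x, by rw [Nat.cast_mul]⟩
  · rintro ⟨w, hw, rfl⟩
    have hn' : n = (∏ i ∈ Sᶜ, p i) * ∏ i ∈ S, p i := by rw [hn, mul_comm, prod_mul_prod_compl]
    refine ⟨ZMod.unitOfCoprime w hw, ?_⟩
    rw [ZMod.coe_unitOfCoprime, ZMod.val_natCast, ← Nat.cast_mul, ZMod.natCast_eq_natCast_iff, hn']
    exact (Nat.ModEq.mul_left' _ (Nat.mod_modEq w _)).symm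

/-- `U_S · U_T ⊆ U_{S ∩ T}`. -/
theorem stmt_3 (m : ℕ) (p : Fin m → ℕ) (hp : ∀ i, (p i).Prime)
    (hinj : Function.Injective p) (n : ℕ) (hn : n = ∏ i, p i) :
    ∀ (S T : Finset (Fin m)) (a b : ZMod n),
      a ∈ USet m p n S → b ∈ USet m p n T → a * b ∈ USet m p n (S ∩ T) := by
  intro S T a b ha hb
  obtain ⟨u, hu, rfl⟩ := (mem_USet_iff hn S a).mp ha
  obtain ⟨v, hv, rfl⟩ := (mem_USet_iff hn T b).mp hb
  have hdisj : Disjoint (S ∪ T)ᶜ (S ∩ T) :=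
    disjoint_compl_left_iff.mpr (inter_subset_left.trans subset_union_left)
  refine (mem_USet_iff hn _ _).mpr ⟨(∏ i ∈ (S ∪ T)ᶜ, p i) * u * v, ?_, ?_⟩
  · exact ((Nat.coprime_prod_of_disjoint hp hinj hdisj).mul_left
      (hu.coprime_dvd_right (prod_dvd_prod_of_subset _ _ _ inter_subset_left))).mul_left
      (hv.coprime_dvd_right (prod_dvd_prod_of_subset _ _ _ inter_subset_right))
  · have hprod : (∏ i ∈ Sᶜ, p i) * ∏ i ∈ Tᶜ, p i =
        (∏ i ∈ (S ∩ T)ᶜ, p i) * ∏ i ∈ (S ∪ T)ᶜ, p i := by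
      rw [compl_inter, compl_union, prod_union_inter]
    rw [← Nat.cast_mul]
    congr 1
    calc (∏ i ∈ Sᶜ, p i) * u * ((∏ i ∈ Tᶜ, p i) * v)
        = ((∏ i ∈ Sᶜ, p i) * ∏ i ∈ Tᶜ, p i) * (u * v) := by ring
      _ = _ := by rw [hprod]; ring
end

section
/- Let p and q be distinct primes and n = pq. Then the multiplicative semigroup Z_n is the disjoint union of four sets, each of which is a group under multiplication mod n: the units U_n, the set {qx mod n : x a unit mod p}, the set {px mod n : x a unit mod q}, and {0}. -/
/-- `H ⊆ ZMod n` is a group under multiplication mod `n`. -/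
def IsMulGroupSet (n : ℕ) (H : Set (ZMod n)) : Prop :=
  (∀ a ∈ H, ∀ b ∈ H, a * b ∈ H) ∧
  ∃ e ∈ H, (∀ a ∈ H, e * a = a ∧ a * e = a) ∧ ∀ a ∈ H, ∃ b ∈ H, a * b = e

/-- For `n = pq` with `p ≠ q` prime, `ZMod n` is the disjoint union of four sets,
each a group under multiplication: the units, `{qx : x ∈ U_p}`, `{px : x ∈ U_q}` and `{0}`. -/
theorem stmt_4 (p q : ℕ) (hp : p.Prime) (hq : q.Prime) (hpq : p ≠ q)
    (n : ℕ) (hn : n = p * q)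
    (A B C D : Set (ZMod n))
    (hA : A = {y : ZMod n | ∃ x : (ZMod n)ˣ, y = (x : ZMod n)})
    (hB : B = {y : ZMod n | ∃ x : (ZMod p)ˣ, y = (q : ZMod n) * (((x : ZMod p).val : ℕ) : ZMod n)})
    (hC : C = {y : ZMod n | ∃ x : (ZMod q)ˣ, y = (p : ZMod n) * (((x : ZMod q).val : ℕ) : ZMod n)})
    (hD : D = {0}) :
    (A ∪ B ∪ C ∪ D = Set.univ) ∧
    (Disjoint A B ∧ Disjoint A C ∧ Disjoint A D ∧ Disjoint B C ∧ Disjoint B D ∧ Disjoint C D) ∧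
    IsMulGroupSet n A ∧ IsMulGroupSet n B ∧ IsMulGroupSet n C ∧ IsMulGroupSet n D := by
  haveI : Fact p.Prime := ⟨hp⟩
  haveI : Fact q.Prime := ⟨hq⟩
  subst hn hA hB hC hD
  haveI : NeZero (p * q) := ⟨Nat.mul_ne_zero hp.ne_zero hq.ne_zero⟩
  have hcop : Nat.Coprime p q := (Nat.coprime_primes hp hq).mpr hpq
  set f : ZMod (p*q) →+* ZMod p := ZMod.castHom (dvd_mul_right p q) (ZMod p) with hf
  set g : ZMod (p*q) →+* ZMod q := ZMod.castHom (dvd_mul_left q p) (ZMod q) with hg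
  -- values of f, g on casts
  have hfval : ∀ a : ZMod (p*q), f a = ((a.val : ℕ) : ZMod p) := by
    intro a
    conv_lhs => rw [← ZMod.natCast_rightInverse a]
    exact map_natCast f a.val
  have hgval : ∀ a : ZMod (p*q), g a = ((a.val : ℕ) : ZMod q) := by
    intro a
    conv_lhs => rw [← ZMod.natCast_rightInverse a]
    exact map_natCast g a.val
  have hf0 : ∀ a : ZMod (p*q), f a = 0 ↔ p ∣ a.val := by
    intro a; rw [hfval a]; exact ZMod.natCast_eq_zero_iff _ _
  have hg0 : ∀ a : ZMod (p*q), g a = 0 ↔ q ∣ a.val := by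
    intro a; rw [hgval a]; exact ZMod.natCast_eq_zero_iff _ _
  -- injectivity of the pair (f, g)
  have inj : ∀ a b : ZMod (p*q), f a = f b → g a = g b → a = b := by
    intro a b h1 h2
    have h3 : f (a - b) = 0 := by rw [map_sub, h1, sub_self]
    have h4 : g (a - b) = 0 := by rw [map_sub, h2, sub_self]
    have h5 : (p * q) ∣ (a - b).val :=
      Nat.Coprime.mul_dvd_of_dvd_of_dvd hcop ((hf0 _).mp h3) ((hg0 _).mp h4)
    have h6 : ((a - b).val : ZMod (p*q)) = 0 := (ZMod.natCast_eq_zero_iff _ _).mpr h5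
    rw [ZMod.natCast_rightInverse] at h6
    exact sub_eq_zero.mp h6
  -- q is a unit mod p, p is a unit mod q
  have hqp : ((q : ℕ) : ZMod p) ≠ 0 := by
    rw [Ne, ZMod.natCast_eq_zero_iff]
    exact fun h => hpq ((Nat.prime_dvd_prime_iff_eq hp hq).mp h)
  have hpq' : ((p : ℕ) : ZMod q) ≠ 0 := by
    rw [Ne, ZMod.natCast_eq_zero_iff]
    exact fun h => hpq ((Nat.prime_dvd_prime_iff_eq hq hp).mp h).symm
  -- value of f, g on B-type elements
  have hfB : ∀ x : (ZMod p)ˣ, f ((q : ZMod (p*q)) * (((x : ZMod p).val : ℕ) : ZMod (p*q)))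
      = ((q:ℕ) : ZMod p) * (x : ZMod p) := by
    intro x
    rw [map_mul, map_natCast, map_natCast, ZMod.natCast_rightInverse]
  have hgB : ∀ x : (ZMod p)ˣ, g ((q : ZMod (p*q)) * (((x : ZMod p).val : ℕ) : ZMod (p*q))) = 0 := by
    intro x
    rw [map_mul, map_natCast, ZMod.natCast_self, zero_mul]
  have hfC : ∀ x : (ZMod q)ˣ, f ((p : ZMod (p*q)) * (((x : ZMod q).val : ℕ) : ZMod (p*q))) = 0 := by
    intro x
    rw [map_mul, map_natCast, ZMod.natCast_self, zero_mul]
  have hgC : ∀ x : (ZMod q)ˣ, g ((p : ZMod (p*q)) * (((x : ZMod q).val : ℕ) : ZMod (p*q)))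
      = ((p:ℕ) : ZMod q) * (x : ZMod q) := by
    intro x
    rw [map_mul, map_natCast, map_natCast, ZMod.natCast_rightInverse]
  -- membership characterizations
  have hAc : ∀ a : ZMod (p*q),
      (a ∈ {y : ZMod (p*q) | ∃ x : (ZMod (p*q))ˣ, y = (x : ZMod (p*q))}) ↔ f a ≠ 0 ∧ g a ≠ 0 := by
    intro a
    constructor
    · rintro ⟨x, rfl⟩
      constructor
      · exact (x.map f.toMonoidHom).ne_zero
      · exact (x.map g.toMonoidHom).ne_zero
    · rintro ⟨h1, h2⟩
      have hu : IsUnit a := by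
        rw [← ZMod.natCast_rightInverse a, ZMod.isUnit_iff_coprime, Nat.coprime_mul_iff_right]
        refine ⟨Nat.Coprime.symm (hp.coprime_iff_not_dvd.mpr ?_),
                Nat.Coprime.symm (hq.coprime_iff_not_dvd.mpr ?_)⟩
        · exact fun h => h1 ((hf0 a).mpr h)
        · exact fun h => h2 ((hg0 a).mpr h)
      exact ⟨hu.unit, (hu.unit_spec).symm⟩
  have hBc : ∀ a : ZMod (p*q),
      (a ∈ {y : ZMod (p*q) | ∃ x : (ZMod p)ˣ, y = (q : ZMod (p*q)) * (((x : ZMod p).val : ℕ) : ZMod (p*q))})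
        ↔ f a ≠ 0 ∧ g a = 0 := by
    intro a
    constructor
    · rintro ⟨x, rfl⟩
      rw [hfB x, hgB x]
      exact ⟨mul_ne_zero hqp x.ne_zero, rfl⟩
    · rintro ⟨h1, h2⟩
      have hu : IsUnit (((q:ℕ) : ZMod p)⁻¹ * f a) :=
        (isUnit_iff_ne_zero.mpr (inv_ne_zero hqp)).mul (isUnit_iff_ne_zero.mpr h1)
      refine ⟨hu.unit, inj _ _ ?_ ?_⟩
      · rw [hfB, hu.unit_spec, ← mul_assoc, mul_inv_cancel₀ hqp, one_mul]
      · rw [hgB, h2]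
  have hCc : ∀ a : ZMod (p*q),
      (a ∈ {y : ZMod (p*q) | ∃ x : (ZMod q)ˣ, y = (p : ZMod (p*q)) * (((x : ZMod q).val : ℕ) : ZMod (p*q))})
        ↔ f a = 0 ∧ g a ≠ 0 := by
    intro a
    constructor
    · rintro ⟨x, rfl⟩
      rw [hfC x, hgC x]
      exact ⟨rfl, mul_ne_zero hpq' x.ne_zero⟩
    · rintro ⟨h1, h2⟩
      have hu : IsUnit (((p:ℕ) : ZMod q)⁻¹ * g a) :=
        (isUnit_iff_ne_zero.mpr (inv_ne_zero hpq')).mul (isUnit_iff_ne_zero.mpr h2)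
      refine ⟨hu.unit, inj _ _ ?_ ?_⟩
      · rw [hfC, h1]
      · rw [hgC, hu.unit_spec, ← mul_assoc, mul_inv_cancel₀ hpq', one_mul]
  have hDc : ∀ a : ZMod (p*q), (a ∈ ({0} : Set (ZMod (p*q)))) ↔ f a = 0 ∧ g a = 0 := by
    intro a
    constructor
    · rintro rfl; exact ⟨map_zero f, map_zero g⟩
    · rintro ⟨h1, h2⟩
      exact inj a 0 (by rw [h1, map_zero]) (by rw [h2, map_zero])
  refine ⟨?_, ⟨?_, ?_, ?_, ?_, ?_, ?_⟩, ?_, ?_, ?_, ?_⟩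
  · -- union
    ext a
    simp only [Set.mem_union, Set.mem_univ, iff_true]
    by_cases h1 : f a = 0 <;> by_cases h2 : g a = 0
    · exact Or.inr ((hDc a).mpr ⟨h1, h2⟩)
    · exact Or.inl (Or.inr ((hCc a).mpr ⟨h1, h2⟩))
    · exact Or.inl (Or.inl (Or.inr ((hBc a).mpr ⟨h1, h2⟩)))
    · exact Or.inl (Or.inl (Or.inl ((hAc a).mpr ⟨h1, h2⟩)))
  · exact Set.disjoint_left.mpr fun a ha hb => ((hAc a).mp ha).2 ((hBc a).mp hb).2
  · exact Set.disjoint_left.mpr fun a ha hb => ((hAc a).mp ha).1 ((hCc a).mp hb).1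
  · exact Set.disjoint_left.mpr fun a ha hb => ((hAc a).mp ha).1 ((hDc a).mp hb).1
  · exact Set.disjoint_left.mpr fun a ha hb => ((hBc a).mp ha).1 ((hCc a).mp hb).1
  · exact Set.disjoint_left.mpr fun a ha hb => ((hBc a).mp ha).1 ((hDc a).mp hb).1
  · exact Set.disjoint_left.mpr fun a ha hb => ((hCc a).mp ha).2 ((hDc a).mp hb).2
  · -- A is a group
    refine ⟨?_, 1, ⟨1, rfl⟩, fun a _ => ⟨one_mul a, mul_one a⟩, ?_⟩
    · rintro a ⟨x, rfl⟩ b ⟨y, rfl⟩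
      exact ⟨x * y, (Units.val_mul x y).symm⟩
    · rintro a ⟨x, rfl⟩
      exact ⟨(x⁻¹ : (ZMod (p*q))ˣ), ⟨x⁻¹, rfl⟩, by rw [← Units.val_mul, mul_inv_cancel, Units.val_one]⟩
  · -- B is a group
    have hident : ∃ e, e ∈ {y : ZMod (p*q) | ∃ x : (ZMod p)ˣ, y = (q : ZMod (p*q)) * (((x : ZMod p).val : ℕ) : ZMod (p*q))} ∧ f e = 1 ∧ g e = 0 := by
      have hu : IsUnit (((q:ℕ) : ZMod p)⁻¹) := isUnit_iff_ne_zero.mpr (inv_ne_zero hqp)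
      refine ⟨_, ⟨hu.unit, rfl⟩, ?_, hgB _⟩
      rw [hfB, hu.unit_spec, mul_inv_cancel₀ hqp]
    obtain ⟨e, heB, hfe, hge⟩ := hident
    refine ⟨?_, e, heB, ?_, ?_⟩
    · intro a ha b hb
      obtain ⟨ha1, ha2⟩ := (hBc a).mp ha
      obtain ⟨hb1, hb2⟩ := (hBc b).mp hb
      exact (hBc _).mpr ⟨by rw [map_mul]; exact mul_ne_zero ha1 hb1, by rw [map_mul, ha2, hb2, mul_zero]⟩
    · intro a ha
      obtain ⟨ha1, ha2⟩ := (hBc a).mp ha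
      have h1 : e * a = a := inj _ _ (by rw [map_mul, hfe, one_mul]) (by rw [map_mul, hge, zero_mul, ha2])
      exact ⟨h1, by rw [mul_comm a e]; exact h1⟩
    · intro a ha
      obtain ⟨ha1, ha2⟩ := (hBc a).mp ha
      have hb : (f a)⁻¹ ≠ 0 := inv_ne_zero ha1
      obtain ⟨b, hbB⟩ : ∃ b, b ∈ {y : ZMod (p*q) | ∃ x : (ZMod p)ˣ, y = (q : ZMod (p*q)) * (((x : ZMod p).val : ℕ) : ZMod (p*q))} ∧ f b = (f a)⁻¹ ∧ g b = 0 := by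
        have hu : IsUnit (((q:ℕ) : ZMod p)⁻¹ * (f a)⁻¹) :=
          (isUnit_iff_ne_zero.mpr (inv_ne_zero hqp)).mul (isUnit_iff_ne_zero.mpr hb)
        refine ⟨_, ⟨hu.unit, rfl⟩, ?_, hgB _⟩
        rw [hfB, hu.unit_spec, ← mul_assoc, mul_inv_cancel₀ hqp, one_mul]
      obtain ⟨hbB, hfb, hgb⟩ := hbB
      refine ⟨b, hbB, inj _ _ ?_ ?_⟩
      · rw [map_mul, hfb, mul_inv_cancel₀ ha1, hfe]
      · rw [map_mul, hgb, mul_zero, hge]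
  · -- C is a group
    have hident : ∃ e, e ∈ {y : ZMod (p*q) | ∃ x : (ZMod q)ˣ, y = (p : ZMod (p*q)) * (((x : ZMod q).val : ℕ) : ZMod (p*q))} ∧ f e = 0 ∧ g e = 1 := by
      have hu : IsUnit (((p:ℕ) : ZMod q)⁻¹) := isUnit_iff_ne_zero.mpr (inv_ne_zero hpq')
      refine ⟨_, ⟨hu.unit, rfl⟩, hfC _, ?_⟩
      rw [hgC, hu.unit_spec, mul_inv_cancel₀ hpq']
    obtain ⟨e, heC, hfe, hge⟩ := hident
    refine ⟨?_, e, heC, ?_, ?_⟩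
    · intro a ha b hb
      obtain ⟨ha1, ha2⟩ := (hCc a).mp ha
      obtain ⟨hb1, hb2⟩ := (hCc b).mp hb
      exact (hCc _).mpr ⟨by rw [map_mul, ha1, hb1, mul_zero], by rw [map_mul]; exact mul_ne_zero ha2 hb2⟩
    · intro a ha
      obtain ⟨ha1, ha2⟩ := (hCc a).mp ha
      have h1 : e * a = a := inj _ _ (by rw [map_mul, hfe, zero_mul, ha1]) (by rw [map_mul, hge, one_mul])
      exact ⟨h1, by rw [mul_comm a e]; exact h1⟩
    · intro a ha
      obtain ⟨ha1, ha2⟩ := (hCc a).mp ha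
      have hb : (g a)⁻¹ ≠ 0 := inv_ne_zero ha2
      obtain ⟨b, hbC⟩ : ∃ b, b ∈ {y : ZMod (p*q) | ∃ x : (ZMod q)ˣ, y = (p : ZMod (p*q)) * (((x : ZMod q).val : ℕ) : ZMod (p*q))} ∧ f b = 0 ∧ g b = (g a)⁻¹ := by
        have hu : IsUnit (((p:ℕ) : ZMod q)⁻¹ * (g a)⁻¹) :=
          (isUnit_iff_ne_zero.mpr (inv_ne_zero hpq')).mul (isUnit_iff_ne_zero.mpr hb)
        refine ⟨_, ⟨hu.unit, rfl⟩, hfC _, ?_⟩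
        rw [hgC, hu.unit_spec, ← mul_assoc, mul_inv_cancel₀ hpq', one_mul]
      obtain ⟨hbC, hfb, hgb⟩ := hbC
      refine ⟨b, hbC, inj _ _ ?_ ?_⟩
      · rw [map_mul, hfb, mul_zero, hfe]
      · rw [map_mul, hgb, mul_inv_cancel₀ ha2, hge]
  · -- D is a group
    refine ⟨?_, 0, rfl, ?_, ?_⟩
    · rintro a rfl b rfl; simp
    · rintro a rfl; simp
    · rintro a rfl; exact ⟨0, rfl, by simp⟩
end

section
/- Let G be a finite abelian group, g, p ∈ G, and n an integer coprime to |G|. Let x = (gp)^{n-1}g. Suppose k is an integer with both k and k−1 coprime to |G|, and let m, l be integers with mk ≡ 1 (mod |G|) and l(k−1) ≡ 1 (mod |G|). Then for every h ∈ G, setting q = (h·x^{-k})^l, one has (hq)^{m-1}·h = x. In particular, if |G| is odd, every h ∈ G mimics g. -/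
/-!
Write `j = m - 1`. Expanding in the abelian group,
`(h * (h * (x ^ k)⁻¹) ^ l) ^ j * h = h ^ (j + l * j + 1) * (x ^ (k * l * j))⁻¹`,
and exponents only matter modulo `|G|`. Modulo `|G|` the relations `m * k = 1` and
`l * (k - 1) = 1` give `j + l * j + 1 = 0` and `k * l * j = -1`, so the right-hand side is `x`.
For odd `|G|` take `k = 2`, `l = 1`, `m = (|G| + 1) / 2`.
-/

theorem pow_eq_pow_of_natCast_eq {G : Type*} [Group G] [Fintype G] (a : G) {e f : ℕ}
    (hef : (e : ZMod (Fintype.card G)) = f) : a ^ e = a ^ f := by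
  rw [← pow_mod_card a e, ← pow_mod_card a f, (ZMod.natCast_eq_natCast_iff' e f _).mp hef]

/-- If `b = 0` the hypothesis forces `N = 1`, so the truncated subtraction is harmless. -/
theorem ZMod.natCast_sub_one_of_mul_modEq_one {N a b : ℕ} (hab : a * b ≡ 1 [MOD N]) :
    ((b - 1 : ℕ) : ZMod N) = b - 1 := by
  rcases Nat.eq_zero_or_pos b with rfl | hb
  · have hone : (0 : ZMod N) = 1 := by
      simpa using (ZMod.natCast_eq_natCast_iff _ _ _).mpr hab
    simp [← hone]
  · rw [Nat.cast_sub hb, Nat.cast_one]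

theorem mul_mul_inv_pow_pow_mul_self {G : Type*} [CommGroup G] (h x : G) (k l j : ℕ) :
    (h * (h * (x ^ k)⁻¹) ^ l) ^ j * h = h ^ (j + l * j + 1) * (x ^ (k * l * j))⁻¹ := by
  simp only [mul_pow, inv_pow, ← pow_mul, pow_add, pow_one]
  rw [mul_comm l j, mul_assoc k]
  ac_rfl

theorem mul_mul_inv_pow_pow_pred_mul_self_eq {G : Type*} [CommGroup G] [Fintype G] (h x : G)
    {k m l : ℕ} (hm : m * k ≡ 1 [MOD Fintype.card G])
    (hl : l * (k - 1) ≡ 1 [MOD Fintype.card G]) :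
    (h * (h * (x ^ k)⁻¹) ^ l) ^ (m - 1) * h = x := by
  set N := Fintype.card G
  have hm' : (m : ZMod N) * k = 1 := by
    exact_mod_cast (ZMod.natCast_eq_natCast_iff _ _ _).mpr hm
  have hl' : (l : ZMod N) * (k - 1) = 1 := by
    rw [← ZMod.natCast_sub_one_of_mul_modEq_one hm]
    exact_mod_cast (ZMod.natCast_eq_natCast_iff _ _ _).mpr hl
  have hj : ((m - 1 : ℕ) : ZMod N) = m - 1 :=
    ZMod.natCast_sub_one_of_mul_modEq_one (mul_comm m k ▸ hm)
  have h_exp : ((m - 1 + l * (m - 1) + 1 : ℕ) : ZMod N) = (0 : ℕ) := by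
    push_cast [hj]
    linear_combination (l : ZMod N) * hm' - (m : ZMod N) * hl'
  have x_exp : ((k * l * (m - 1) + 1 : ℕ) : ZMod N) = (0 : ℕ) := by
    push_cast [hj]
    linear_combination (l : ZMod N) * hm' - hl'
  have hx : x ^ (k * l * (m - 1)) * x = 1 := by
    rw [← pow_succ, pow_eq_pow_of_natCast_eq x x_exp, pow_zero]
  rw [mul_mul_inv_pow_pow_mul_self, pow_eq_pow_of_natCast_eq h h_exp, pow_zero, one_mul]
  exact inv_eq_of_mul_eq_one_right hx

theorem stmt_9_general {G : Type*} [CommGroup G] [Fintype G] (x : G) :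
    (∀ k m l : ℕ, Nat.Coprime k (Fintype.card G) → Nat.Coprime (k - 1) (Fintype.card G) →
      m * k ≡ 1 [MOD Fintype.card G] → l * (k - 1) ≡ 1 [MOD Fintype.card G] →
      ∀ h : G, (h * (h * (x ^ k)⁻¹) ^ l) ^ (m - 1) * h = x) ∧
    (Odd (Fintype.card G) → ∀ h : G, ∃ (q : G) (m : ℕ), 0 < m ∧
      Nat.Coprime m (Fintype.card G) ∧ (h * q) ^ (m - 1) * h = x) := by
  refine ⟨fun k m l _ _ hm hl h ↦ mul_mul_inv_pow_pow_pred_mul_self_eq h x hm hl, ?_⟩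
  rintro ⟨c, hc⟩ h
  have hm : (Fintype.card G + 1) / 2 * 2 ≡ 1 [MOD Fintype.card G] := by
    rw [show (Fintype.card G + 1) / 2 * 2 = Fintype.card G + 1 by omega]
    exact Nat.add_modEq_left
  refine ⟨(h * (x ^ 2)⁻¹) ^ 1, (Fintype.card G + 1) / 2, by omega,
    Nat.coprime_of_mul_modEq_one 2 hm, ?_⟩
  exact mul_mul_inv_pow_pow_pred_mul_self_eq h x hm (Nat.ModEq.refl 1)

/-- Let `G` be a finite abelian group, `x = (gp)^(n-1)·g` with `n` coprime to `|G|`.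
If `k` and `k-1` are both coprime to `|G|` and `mk ≡ 1`, `l(k-1) ≡ 1 (mod |G|)`, then
for every `h`, with `q = (h·x^(-k))^l` one has `(hq)^(m-1)·h = x`. In particular if `|G|`
is odd then every `h` mimics `g`. -/
theorem stmt_9 {G : Type*} [CommGroup G] [Fintype G] (g p : G) (n : ℕ) (hn : 0 < n)
    (hcop : n.Coprime (Fintype.card G)) (x : G) (hx : x = (g * p) ^ (n - 1) * g) :
    (∀ k m l : ℕ, Nat.Coprime k (Fintype.card G) → Nat.Coprime (k - 1) (Fintype.card G) →
      m * k ≡ 1 [MOD Fintype.card G] → l * (k - 1) ≡ 1 [MOD Fintype.card G] →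
      ∀ h : G, (h * (h * (x ^ k)⁻¹) ^ l) ^ (m - 1) * h = x) ∧
    (Odd (Fintype.card G) → ∀ h : G, ∃ (q : G) (m : ℕ), 0 < m ∧
      Nat.Coprime m (Fintype.card G) ∧ (h * q) ^ (m - 1) * h = x) :=
  stmt_9_general x
end

section
/- Let G be a finite abelian group of even order, g, p ∈ G, n an odd integer coprime to |G|, and x = (gp)^{n-1}g. Then an element h ∈ G mimics g (i.e., there exist q ∈ G and m coprime to |G| with (hq)^{m-1}h = x) if and only if h = g·z² for some z ∈ G. -/
/-- Let `G` be a finite abelian group of even order, `n` odd and coprime to `|G|`, and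
`x = (gp)^(n-1)·g`. Then `h` mimics `g` (there are `q ∈ G` and `m` coprime to `|G|` with
`(hq)^(m-1)·h = x`) if and only if `h = g·z²` for some `z ∈ G`. -/
theorem stmt_10 {G : Type*} [CommGroup G] [Fintype G] (heven : Even (Fintype.card G))
    (g p : G) (n : ℕ) (hn : 0 < n) (hodd : Odd n) (hcop : n.Coprime (Fintype.card G))
    (x : G) (hx : x = (g * p) ^ (n - 1) * g) :
    ∀ h : G,
      (∃ (q : G) (m : ℕ), 0 < m ∧ Nat.Coprime m (Fintype.card G) ∧
        (h * q) ^ (m - 1) * h = x) ↔ ∃ z : G, h = g * z ^ 2 := by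
  intro h
  obtain ⟨k, hk⟩ := hodd
  have hn1 : n - 1 = 2 * k := by omega
  have hN0 : 0 < Fintype.card G := Fintype.card_pos
  have hN2 : 2 ≤ Fintype.card G := by
    obtain ⟨d, hd⟩ := heven; omega
  constructor
  · rintro ⟨q, m, hm, hmc, heq⟩
    have hmodd : Odd m := by
      rcases Nat.even_or_odd m with he | ho
      · exfalso
        obtain ⟨c, hc⟩ := he
        obtain ⟨d, hd⟩ := heven
        have h2 : 2 ∣ Nat.gcd m (Fintype.card G) :=
          Nat.dvd_gcd ⟨c, by omega⟩ ⟨d, by omega⟩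
        rw [hmc] at h2
        omega
      · exact ho
    obtain ⟨j, hj⟩ := hmodd
    have hm1 : m - 1 = 2 * j := by omega
    rw [hm1, hx, hn1] at heq
    rw [show 2 * j = j * 2 by ring, show 2 * k = k * 2 by ring, pow_mul, pow_mul] at heq
    set a : G := (h * q) ^ j with ha
    set b : G := (g * p) ^ k with hb
    refine ⟨b * a⁻¹, ?_⟩
    have h1 : h = (a ^ 2)⁻¹ * (a ^ 2 * h) := by group
    rw [heq] at h1
    rw [h1]
    simp only [mul_pow, inv_pow]
    simp [mul_comm, mul_assoc, mul_left_comm]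
  · rintro ⟨z, hz⟩
    set t : G := ((g * p) ^ k)⁻¹ * z with ht
    refine ⟨h⁻¹ * t, 2 * Fintype.card G - 1, by omega, ?_, ?_⟩
    · have h1 : Nat.Coprime (Fintype.card G - 1) (Fintype.card G) := by
        have h0 : Nat.Coprime (Fintype.card G - 1) (Fintype.card G - 1 + 1) := by simp
        rwa [show Fintype.card G - 1 + 1 = Fintype.card G by omega] at h0
      have h2 := (Nat.coprime_add_mul_left_left (Fintype.card G - 1) (Fintype.card G) 1).mpr h1
      rwa [show Fintype.card G - 1 + Fintype.card G * 1 = 2 * Fintype.card G - 1 by omega] at h2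
    · have hht : h * (h⁻¹ * t) = t := by group
      rw [hht, show 2 * Fintype.card G - 1 - 1 = 2 * (Fintype.card G - 1) by omega, pow_mul]
      have h1 : (t ^ 2) ^ (Fintype.card G - 1) * t ^ 2 = 1 := by
        rw [← pow_succ, show Fintype.card G - 1 + 1 = Fintype.card G by omega]
        exact pow_card_eq_one
      have h2 : (t ^ 2) ^ (Fintype.card G - 1) = (t ^ 2)⁻¹ :=
        eq_inv_of_mul_eq_one_left h1
      rw [h2, hx, hn1, hz, show 2 * k = k * 2 by ring, pow_mul]
      set b : G := (g * p) ^ k with hb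
      rw [ht]
      simp only [mul_pow, inv_pow, mul_inv_rev, inv_inv]
      simp [mul_comm, mul_assoc, mul_left_comm]
end

section
/- Let n be an odd positive integer. Then T(4n) = S(n), where T(4n) counts odd m with 1 ≤ m ≤ 4n, gcd(m, 4n) = 1 and gcd((m−1)/2, 4n) = 1, and S(n) = #{ m : 1 ≤ m ≤ n, gcd(m,n) = 1 and gcd(m−1,n) = 1 }. -/
/-- `T(n) = #{ m odd : 1 ≤ m ≤ n, gcd(m,n) = 1, gcd((m−1)/2, n) = 1 }`. -/
def Tcount (n : ℕ) : ℕ :=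
  ((Finset.Icc 1 n).filter
    (fun m => m % 2 = 1 ∧ Nat.gcd m n = 1 ∧ Nat.gcd ((m - 1) / 2) n = 1)).card

/-- Schemmel's totient function. -/
def schemmel (n : ℕ) : ℕ :=
  ((Finset.Icc 1 n).filter (fun m => Nat.gcd m n = 1 ∧ Nat.gcd (m - 1) n = 1)).card

/-!
An odd `m` has `(m - 1) / 2` odd exactly when `m ≡ 3 [MOD 4]`, and for odd `n` the factor `2`
does not affect coprimality with `n`. So `T(4n)` counts the residues `x` mod `4n` with
`x ≡ 3 (mod 4)` such that `x` and `x - 1` are units mod `n`. By the Chinese remainder theorem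
`ZMod (4n) ≃ ZMod 4 × ZMod n`, and fixing the first coordinate leaves exactly the residues
counted by `S(n)`.
-/

open Finset

theorem ZMod.card_filter_Icc_natCast (n : ℕ) [NeZero n] (p : ZMod n → Prop) [DecidablePred p] :
    #{m ∈ Icc 1 n | p ((m : ℕ) : ZMod n)} = #{x : ZMod n | p x} := by
  apply card_nbij' (fun m : ℕ => (m : ZMod n)) (fun x => if x = 0 then n else x.val)
  · intro m hm
    simp_all
  · intro x hx
    dsimp only
    split_ifs with h
    · simp_all [Nat.one_le_iff_ne_zero, NeZero.ne n]
    · have := (ZMod.val_ne_zero x).mpr h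
      simp_all [Nat.one_le_iff_ne_zero, (ZMod.val_lt x).le]
  · intro m hm
    simp only [coe_filter, mem_Icc] at hm
    dsimp only
    split_ifs with h
    · exact le_antisymm (Nat.le_of_dvd hm.1.1 ((ZMod.natCast_eq_zero_iff _ _).mp h)) hm.1.2
    · rw [ZMod.val_natCast, Nat.mod_eq_of_lt]
      rcases hm.1.2.lt_or_eq with h' | rfl
      · exact h'
      · simp at h
  · intro x _
    dsimp only
    split_ifs with h <;> simp [h]

theorem ZMod.card_filter_chineseRemainder {a n : ℕ} [NeZero a] [NeZero n] (h : a.Coprime n)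
    (r : ZMod a) (p : ZMod n → Prop) [DecidablePred p] :
    #{x : ZMod (a * n) | (chineseRemainder h x).1 = r ∧ p (chineseRemainder h x).2} =
      #{y : ZMod n | p y} := by
  calc _ = #{z : ZMod a × ZMod n | z.1 = r ∧ p z.2} :=
        card_equiv (chineseRemainder h).toEquiv (by simp)
    _ = #(({r} : Finset (ZMod a)) ×ˢ ({y | p y} : Finset (ZMod n))) := by
        congr 1; ext ⟨u, v⟩; simp [eq_comm, and_comm]
    _ = _ := by simp

theorem Nat.odd_coprime_four_mul_and_half_pred_iff {n m : ℕ} (hn : Coprime 2 n) :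
    (m % 2 = 1 ∧ m.Coprime (4 * n) ∧ ((m - 1) / 2).Coprime (4 * n)) ↔
      m % 4 = 3 ∧ m.Coprime n ∧ (m - 1).Coprime n := by
  have coprime_four_mul (k : ℕ) : k.Coprime (4 * n) ↔ k % 2 = 1 ∧ k.Coprime n := by
    rw [coprime_mul_iff_right, show 4 = 2 ^ 2 by rfl, coprime_pow_right_iff two_pos,
      coprime_two_right, odd_iff]
  rw [coprime_four_mul, coprime_four_mul]
  constructor
  · rintro ⟨hm, ⟨-, hmn⟩, hq, hqn⟩
    have : m - 1 = 2 * ((m - 1) / 2) := by omega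
    exact ⟨by omega, hmn, this ▸ hn.mul_left hqn⟩
  · rintro ⟨hm, hmn, hm1⟩
    rw [show m - 1 = 2 * ((m - 1) / 2) by omega] at hm1
    exact ⟨by omega, ⟨by omega, hmn⟩, by omega, hm1.coprime_mul_left⟩

theorem schemmel_eq_card_isUnit (n : ℕ) [NeZero n] :
    schemmel n = #{x : ZMod n | IsUnit x ∧ IsUnit (x - 1)} := by
  rw [schemmel, ← ZMod.card_filter_Icc_natCast]
  refine congrArg card (filter_congr fun m hm => ?_)
  rw [← Nat.cast_pred (mem_Icc.mp hm).1, ZMod.isUnit_iff_coprime, ZMod.isUnit_iff_coprime]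

theorem Tcount_four_mul_eq_card (n : ℕ) [NeZero n] (h : Nat.Coprime 4 n) :
    Tcount (4 * n) = #{x : ZMod (4 * n) | (ZMod.chineseRemainder h x).1 = 3 ∧
      IsUnit (ZMod.chineseRemainder h x).2 ∧ IsUnit ((ZMod.chineseRemainder h x).2 - 1)} := by
  rw [Tcount, ← ZMod.card_filter_Icc_natCast]
  refine congrArg card (filter_congr fun m hm => ?_)
  simp only [map_natCast, Prod.fst_natCast, Prod.snd_natCast]
  rw [← Nat.cast_pred (mem_Icc.mp hm).1, ZMod.isUnit_iff_coprime, ZMod.isUnit_iff_coprime,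
    show (m : ZMod 4) = 3 ↔ m % 4 = 3 by simpa using ZMod.natCast_eq_natCast_iff' m 3 4]
  exact Nat.odd_coprime_four_mul_and_half_pred_iff (h.coprime_dvd_left (by norm_num))

theorem stmt_15_general (n : ℕ) (hodd : Odd n) : Tcount (4 * n) = schemmel n := by
  have : NeZero n := ⟨hodd.pos.ne'⟩
  have h4 : Nat.Coprime 4 n := (Nat.coprime_two_left.mpr hodd).pow_left 2
  rw [Tcount_four_mul_eq_card n h4, schemmel_eq_card_isUnit,
    ZMod.card_filter_chineseRemainder h4 3 (fun y => IsUnit y ∧ IsUnit (y - 1))]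

/-- For odd `n`, `T(4n) = S(n)`. -/
theorem stmt_15 (n : ℕ) (hn : 0 < n) (hodd : Odd n) : Tcount (4 * n) = schemmel n :=
  stmt_15_general n hodd
end

section
/- Let n be an odd positive integer and e > 2 an integer. Then T(2^e n) = 2·T(2^{e−1} n); consequently T(2^e n) = 2^{e−2}·S(n). -/
/-!
Writing `N = 2^e n`, a number `m` is counted by `T(N)` iff `m ≡ 3 (mod 4)` and both `m` and
`m - 1` are prime to `n`. This condition is periodic modulo `4n`, so `T(2^e n) = 2^(e-2) T(4n)`,
and by the Chinese remainder theorem the residues modulo `4n` satisfying it correspond to the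
single class `3 (mod 4)` paired with the residues modulo `n` counted by `S(n)`.
-/

open Finset Function Nat

theorem Function.Periodic.count_mul {p : ℕ → Prop} [DecidablePred p] {a : ℕ}
    (hp : Periodic p a) (c : ℕ) : count p (c * a) = c * count p a := by
  induction c with
  | zero => simp
  | succ c ih =>
    have hshift : (fun k => p (c * a + k)) = p := funext fun k => by
      rw [add_comm]; exact hp.nat_mul c k
    simp only [add_mul, one_mul, count_add, ih, hshift]

theorem Nat.count_and_of_coprime {a b : ℕ} (hab : Coprime a b) {p q : ℕ → Prop}
    [DecidablePred p] [DecidablePred q] (hp : Periodic p a) (hq : Periodic q b) :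
    count (fun m => p m ∧ q m) (a * b) = count p a * count q b := by
  simp only [count_eq_card_filter_range, ← card_product]
  refine card_bij (fun m _ => (m % a, m % b)) ?_ ?_ ?_
  · intro m hm
    simp only [mem_filter, mem_range, mem_product] at hm ⊢
    have hab_pos : 0 < a * b := m.zero_le.trans_lt hm.1
    have ha := pos_of_mul_pos_left hab_pos b.zero_le
    have hb := pos_of_mul_pos_right hab_pos a.zero_le
    exact ⟨⟨mod_lt m ha, (hp.map_mod_nat m).symm ▸ hm.2.1⟩,
      ⟨mod_lt m hb, (hq.map_mod_nat m).symm ▸ hm.2.2⟩⟩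
  · intro m hm m' hm' h
    simp only [mem_filter, mem_range, Prod.mk.injEq] at hm hm' h
    exact ((modEq_and_modEq_iff_modEq_mul hab).mp h).eq_of_lt_of_lt hm.1 hm'.1
  · rintro ⟨x, y⟩ hxy
    simp only [mem_filter, mem_range, mem_product] at hxy
    obtain ⟨⟨hxa, hpx⟩, hyb, hqy⟩ := hxy
    obtain ⟨hkx, hky⟩ := (chineseRemainder hab x y).prop
    have hkx' := mod_eq_of_modEq hkx hxa
    have hky' := mod_eq_of_modEq hky hyb
    refine ⟨chineseRemainder hab x y, ?_, by rw [hkx', hky']⟩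
    simp only [mem_filter, mem_range]
    refine ⟨chineseRemainder_lt_mul hab x y (by omega) (by omega), ?_, ?_⟩
    · rwa [← hp.map_mod_nat, hkx']
    · rwa [← hq.map_mod_nat, hky']

/-- `m + n - 1` rather than `m - 1`, so that the condition is `n`-periodic also at `m = 0`. -/
def SchemmelCond (n m : ℕ) : Prop :=
  Coprime m n ∧ Coprime (m + n - 1) n

instance (n : ℕ) : DecidablePred (SchemmelCond n) :=
  fun _ => inferInstanceAs (Decidable (_ ∧ _))

theorem schemmelCond_periodic (n : ℕ) : Periodic (SchemmelCond n) n := fun m => by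
  rw [SchemmelCond, SchemmelCond, show m + n + n - 1 = m + n - 1 + n by omega,
    coprime_add_self_left, coprime_add_self_left]

theorem schemmel_eq_count (n : ℕ) : schemmel n = count (SchemmelCond n) n := by
  rw [schemmel, ← filter_Ico_card_eq_of_periodic 1 n _ (schemmelCond_periodic n), add_comm,
    Ico_add_one_right_eq_Icc]
  refine congrArg card (filter_congr fun m hm => ?_)
  rw [SchemmelCond, show m + n - 1 = m - 1 + n by grind, coprime_add_self_left]

theorem coprime_two_pow_mul_iff {e : ℕ} (he : e ≠ 0) (x n : ℕ) :
    Coprime x (2 ^ e * n) ↔ x % 2 = 1 ∧ Coprime x n := by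
  rw [coprime_mul_iff_right, coprime_pow_right_iff (pos_of_ne_zero he), coprime_two_right,
    odd_iff]

theorem count_mod_four_eq_three_and_schemmelCond {n : ℕ} (hodd : Odd n) :
    count (fun m => m % 4 = 3 ∧ SchemmelCond n m) (4 * n) = schemmel n := by
  have h4n : Coprime 4 n := by
    simpa using (coprime_two_left.mpr hodd).pow_left 2
  rw [count_and_of_coprime (p := (· % 4 = 3)) h4n (fun m => by simp only [add_mod_right])
      (schemmelCond_periodic n),
    schemmel_eq_count, show count (· % 4 = 3) 4 = 1 by decide, one_mul]

theorem tcount_cond_iff {n e : ℕ} (hodd : Odd n) (he : e ≠ 0) (m : ℕ) :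
    (m % 2 = 1 ∧ Coprime m (2 ^ e * n) ∧ Coprime ((m - 1) / 2) (2 ^ e * n)) ↔
      m % 4 = 3 ∧ SchemmelCond n m := by
  have hhalf (h : m % 4 = 3) : Coprime ((m - 1) / 2) n ↔ Coprime (m + n - 1) n := by
    rw [show m + n - 1 = (m - 1) / 2 * 2 + n by omega, coprime_add_self_left,
      coprime_mul_iff_left, and_iff_left (coprime_two_left.mpr hodd)]
  rw [SchemmelCond, coprime_two_pow_mul_iff he, coprime_two_pow_mul_iff he]
  constructor
  · rintro ⟨hodd_m, ⟨-, hm⟩, hodd_half, hh⟩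
    have h4 : m % 4 = 3 := by omega
    exact ⟨h4, hm, (hhalf h4).mp hh⟩
  · rintro ⟨h4, hm, hh⟩
    exact ⟨by omega, ⟨by omega, hm⟩, by omega, (hhalf h4).mpr hh⟩

theorem tcount_two_pow_mul {n e : ℕ} (hodd : Odd n) (he : 2 ≤ e) :
    Tcount (2 ^ e * n) = 2 ^ (e - 2) * schemmel n := by
  set R := fun m => m % 4 = 3 ∧ SchemmelCond n m
  have hR : Periodic R (4 * n) := fun m =>
    congr_arg₂ (· ∧ ·) (by simp only [add_mul_mod_self_left])
      ((schemmelCond_periodic n).nat_mul 4 m)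
  have hN : 2 ^ e * n = 2 ^ (e - 2) * (4 * n) := by
    rw [← mul_assoc, show 4 = 2 ^ 2 by rfl, ← pow_add, Nat.sub_add_cancel he]
  have hper : Periodic R (2 ^ e * n) := by
    simpa only [hN, cast_id] using hR.nat_mul (2 ^ (e - 2))
  calc Tcount (2 ^ e * n) = count R (2 ^ e * n) := by
        rw [Tcount, ← filter_Ico_card_eq_of_periodic 1 _ R hper, add_comm,
          Ico_add_one_right_eq_Icc]
        exact congrArg card (filter_congr fun m _ => tcount_cond_iff hodd (by omega) m)
    _ = 2 ^ (e - 2) * schemmel n := by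
        rw [hN, hR.count_mul, count_mod_four_eq_three_and_schemmelCond hodd]

theorem stmt_16_general (n : ℕ) (hodd : Odd n) (e : ℕ) (he : 2 < e) :
    Tcount (2 ^ e * n) = 2 * Tcount (2 ^ (e - 1) * n) ∧
    Tcount (2 ^ e * n) = 2 ^ (e - 2) * schemmel n := by
  rw [tcount_two_pow_mul hodd he.le, tcount_two_pow_mul hodd (by omega : 2 ≤ e - 1),
    ← mul_assoc, ← pow_succ']
  exact ⟨by congr 2; omega, rfl⟩

/-- For odd `n` and `e > 2`, `T(2^e·n) = 2·T(2^(e−1)·n)`, hence `T(2^e·n) = 2^(e−2)·S(n)`. -/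
theorem stmt_16 (n : ℕ) (hn : 0 < n) (hodd : Odd n) (e : ℕ) (he : 2 < e) :
    Tcount (2 ^ e * n) = 2 * Tcount (2 ^ (e - 1) * n) ∧
    Tcount (2 ^ e * n) = 2 ^ (e - 2) * schemmel n :=
  stmt_16_general n hodd e he
end

section
/- Let n = 2q where q is an odd prime. Then T(n) = (q−3)/2 if q ≡ 3 (mod 4), and T(n) = (q−1)/2 if q ≡ 1 (mod 4), where T(n) = #{ m odd : 1 ≤ m ≤ n, gcd(m,n) = 1, gcd((m−1)/2, n) = 1 }. -/
lemma Tcount_key (q t : ℕ) (hq : q.Prime) (hqt : q = 2 * t + 1) (ht : 1 ≤ t) :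
    Tcount (2 * q) = ((Finset.range t).filter (fun j => 4 * j + 3 ≠ q)).card := by
  unfold Tcount
  have hset : ((Finset.Icc 1 (2 * q)).filter
      (fun m => m % 2 = 1 ∧ Nat.gcd m (2 * q) = 1 ∧ Nat.gcd ((m - 1) / 2) (2 * q) = 1))
      = ((Finset.range t).filter (fun j => 4 * j + 3 ≠ q)).image (fun j => 4 * j + 3) := by
    ext m
    simp only [Finset.mem_filter, Finset.mem_Icc, Finset.mem_image, Finset.mem_range]
    constructor
    · rintro ⟨⟨h1, h2⟩, h3, h4, h5⟩
      -- (m-1)/2 is odd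
      have hk : (m - 1) / 2 % 2 = 1 := by
        rcases Nat.even_or_odd ((m - 1) / 2) with he | ho
        · exfalso
          have hd : 2 ∣ Nat.gcd ((m - 1) / 2) (2 * q) :=
            Nat.dvd_gcd he.two_dvd (dvd_mul_right 2 q)
          rw [h5] at hd
          omega
        · exact Nat.odd_iff.mp ho
      have hmq : m ≠ q := by
        intro h
        have hd : q ∣ Nat.gcd m (2 * q) := Nat.dvd_gcd (h ▸ dvd_refl q) (dvd_mul_left q 2)
        rw [h4] at hd
        have := Nat.le_of_dvd one_pos hd
        have := hq.two_le
        omega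
      exact ⟨(m - 3) / 4, ⟨by omega, by omega⟩, by omega⟩
    · rintro ⟨j, hj, hjq, rfl⟩
      have hq3 : 3 ≤ q := by
        have := hq.two_le; omega
      refine ⟨⟨by omega, by omega⟩, by omega, ?_, ?_⟩
      · have hc2 : Nat.Coprime (4 * j + 3) 2 :=
          Nat.coprime_two_right.mpr (by rw [Nat.odd_iff]; omega)
        have hcq : Nat.Coprime (4 * j + 3) q := by
          rw [Nat.coprime_comm]
          refine (Nat.Prime.coprime_iff_not_dvd hq).mpr ?_
          rintro ⟨c, hc⟩
          rcases Nat.lt_or_ge c 2 with hcl | hcl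
          · interval_cases c <;> omega
          · have : q * 2 ≤ q * c := Nat.mul_le_mul_left q hcl
            omega
        exact (Nat.coprime_mul_iff_right.mpr ⟨hc2, hcq⟩ : _)
      · have h1 : (4 * j + 3 - 1) / 2 = 2 * j + 1 := by omega
        rw [h1]
        have hc2 : Nat.Coprime (2 * j + 1) 2 :=
          Nat.coprime_two_right.mpr (by rw [Nat.odd_iff]; omega)
        have hcq : Nat.Coprime (2 * j + 1) q := by
          rw [Nat.coprime_comm]
          refine (Nat.Prime.coprime_iff_not_dvd hq).mpr ?_
          intro hdvd
          have := Nat.le_of_dvd (by omega) hdvd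
          omega
        exact (Nat.coprime_mul_iff_right.mpr ⟨hc2, hcq⟩ : _)
  rw [hset, Finset.card_image_of_injective _ (fun a b h => by
    change 4 * a + 3 = 4 * b + 3 at h; omega)]

/-- For `q` an odd prime, `T(2q) = (q−3)/2` if `q ≡ 3 (mod 4)` and `(q−1)/2` if
`q ≡ 1 (mod 4)`. -/
theorem stmt_18 (q : ℕ) (hq : q.Prime) (hodd : q ≠ 2) :
    (q % 4 = 3 → Tcount (2 * q) = (q - 3) / 2) ∧
    (q % 4 = 1 → Tcount (2 * q) = (q - 1) / 2) := by
  have hq2 : 2 ≤ q := hq.two_le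
  have hodd' : q % 2 = 1 := Nat.odd_iff.mp (hq.odd_of_ne_two hodd)
  have hq3 : 3 ≤ q := by omega
  set t := (q - 1) / 2 with ht
  have hqt : q = 2 * t + 1 := by omega
  have ht1 : 1 ≤ t := by omega
  have hkey := Tcount_key q t hq hqt ht1
  constructor
  · intro h4
    have hs : q = 4 * ((q - 3) / 4) + 3 := by omega
    set s := (q - 3) / 4 with hsdef
    have hst : s < t := by omega
    have hfil : (Finset.range t).filter (fun j => 4 * j + 3 ≠ q)
        = (Finset.range t).erase s := by
      ext j
      simp only [Finset.mem_filter, Finset.mem_range, Finset.mem_erase]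
      constructor
      · rintro ⟨hj, hne⟩; exact ⟨by omega, hj⟩
      · rintro ⟨hne, hj⟩; exact ⟨hj, by omega⟩
    rw [hkey, hfil, Finset.card_erase_of_mem (Finset.mem_range.mpr hst),
      Finset.card_range]
    omega
  · intro h4
    have hfil : (Finset.range t).filter (fun j => 4 * j + 3 ≠ q)
        = Finset.range t := by
      apply Finset.filter_true_of_mem
      intro j _
      omega
    rw [hkey, hfil, Finset.card_range]
end

section
/- Let p be an odd prime and e ≥ 1 an integer. The number of odd integers m with 1 ≤ m ≤ p^e such that gcd(m, p) = 1 and gcd((m−1)/2, p) = 1 equals (p^e − 2p^{e−1} − 1)/2, i.e. T(p^e) = (S(p^e) − 1)/2. -/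
/-!
Writing the odd `m ≤ p^e` as `m = 2k + 1` with `k < (p^e + 1)/2`, both coprimality conditions
say that `k` avoids one residue class mod `p`: `k ≢ 0` and `k ≢ (p - 1)/2`. Since
`(p^e + 1)/2 = p · (q - 1)/2 + (p + 1)/2` with `q = p^(e-1)`, the range consists of `(q - 1)/2`
full periods followed by the residues `0, …, (p - 1)/2`, so each excluded class is hit
`(q + 1)/2` times, and `(p^e + 1)/2 - (q + 1) = (p^e - 2q - 1)/2`.
-/

open Finset

lemma Tcount_eq_card_filter_range (n : ℕ) :
    Tcount n = #{k ∈ range ((n + 1) / 2) | Nat.Coprime (2 * k + 1) n ∧ Nat.Coprime k n} := by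
  symm
  apply card_nbij' (fun k => 2 * k + 1) (fun m => (m - 1) / 2)
  · intro k hk
    simp only [mem_coe, mem_filter, mem_range, mem_Icc] at hk ⊢
    obtain ⟨hk, hcop, hcop'⟩ := hk
    refine ⟨⟨by omega, by omega⟩, by omega, hcop, ?_⟩
    rwa [show (2 * k + 1 - 1) / 2 = k by omega]
  · intro m hm
    simp only [mem_coe, mem_filter, mem_range, mem_Icc] at hm ⊢
    obtain ⟨⟨hm1, hmn⟩, hodd, hcop, hcop'⟩ := hm
    rw [show 2 * ((m - 1) / 2) + 1 = m by omega]
    exact ⟨by omega, hcop, hcop'⟩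
  · intro k _
    dsimp only
    omega
  · intro m hm
    simp only [mem_coe, mem_filter] at hm
    dsimp only
    omega

lemma card_filter_not_and_not_of_disjoint {α : Type*} [DecidableEq α] (s : Finset α)
    (P Q : α → Prop) [DecidablePred P] [DecidablePred Q] (h : ∀ x ∈ s, P x → ¬ Q x) :
    #{x ∈ s | ¬ P x ∧ ¬ Q x} = #s - #{x ∈ s | P x} - #{x ∈ s | Q x} := by
  simp_rw [← not_or]
  rw [filter_not, card_sdiff_of_subset (filter_subset _ _), filter_or,
    card_union_of_disjoint (disjoint_filter.2 h), Nat.sub_sub]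

lemma Nat.dvd_two_mul_add_one_iff_modEq {p : ℕ} (hp : Odd p) (k : ℕ) :
    p ∣ 2 * k + 1 ↔ k ≡ p / 2 [MOD p] := by
  have hp2 : Nat.Coprime p 2 := Nat.Coprime.symm (Nat.coprime_two_left.2 hp)
  have hp_eq : 2 * (p / 2) + 1 = p := Nat.two_mul_div_two_add_one_of_odd hp
  rw [← Nat.modEq_zero_iff_dvd]
  constructor
  · intro h
    apply Nat.ModEq.cancel_left_of_coprime hp2
    apply Nat.ModEq.add_right_cancel' 1
    rw [hp_eq]
    exact h.trans (Nat.modEq_zero_iff_dvd.2 dvd_rfl).symm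
  · intro h
    have h' := (h.mul_left 2).add_right 1
    rw [hp_eq] at h'
    exact h'.trans (Nat.modEq_zero_iff_dvd.2 dvd_rfl)

lemma card_filter_range_modEq {p q v : ℕ} (hp1 : 1 < p) (hq : Odd q) (hv : 2 * v < p) :
    #{k ∈ range ((p * q + 1) / 2) | k ≡ v [MOD p]} = (q + 1) / 2 := by
  obtain ⟨j, rfl⟩ := hq
  have hp0 : 0 < p := by omega
  have hN : (p * (2 * j + 1) + 1) / 2 = (p + 1) / 2 + p * j := by
    rw [show p * (2 * j + 1) = 2 * (p * j) + p by ring]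
    omega
  have hlt : (p + 1) / 2 < p := by omega
  rw [← Nat.count_eq_card_filter_range, Nat.count_modEq_card _ hp0, hN,
    Nat.add_mul_div_left _ _ hp0, Nat.add_mul_mod_self_left, Nat.div_eq_of_lt hlt,
    Nat.mod_eq_of_lt hlt, Nat.mod_eq_of_lt (by omega : v < p), if_pos (by omega)]
  omega

lemma card_filter_range_not_modEq {p q : ℕ} (hp : Odd p) (hp3 : 3 ≤ p) (hq : Odd q) :
    #{k ∈ range ((p * q + 1) / 2) | ¬ k ≡ p / 2 [MOD p] ∧ ¬ k ≡ 0 [MOD p]}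
      = (p * q - 2 * q - 1) / 2 := by
  have hp2 : p % 2 = 1 := Nat.odd_iff.1 hp
  have hdisj : ∀ k ∈ range ((p * q + 1) / 2), k ≡ p / 2 [MOD p] → ¬ k ≡ 0 [MOD p] := by
    intro k _ h h0
    have := h.symm.trans h0
    rw [Nat.ModEq, Nat.mod_eq_of_lt (show p / 2 < p by omega), Nat.zero_mod] at this
    omega
  rw [card_filter_not_and_not_of_disjoint _ _ _ hdisj, card_range,
    card_filter_range_modEq (v := p / 2) (by omega) hq (by omega),
    card_filter_range_modEq (v := 0) (by omega) hq (by omega)]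
  have hpq : (p * q) % 2 = 1 := Nat.odd_iff.1 (hp.mul hq)
  have hq2 : q % 2 = 1 := Nat.odd_iff.1 hq
  have h3q : 3 * q ≤ p * q := Nat.mul_le_mul_right q hp3
  omega

lemma Nat.Prime.coprime_pow_right_iff_not_dvd {p e : ℕ} (hp : p.Prime) (he : e ≠ 0) (x : ℕ) :
    Nat.Coprime x (p ^ e) ↔ ¬ p ∣ x := by
  rw [Nat.coprime_pow_right_iff (Nat.pos_of_ne_zero he), Nat.coprime_comm,
    hp.coprime_iff_not_dvd]

/-- For `p` an odd prime and `e ≥ 1`, `T(p^e) = (p^e − 2p^(e−1) − 1)/2 = (S(p^e) − 1)/2`. -/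
theorem stmt_19 (p : ℕ) (hp : p.Prime) (hodd : p ≠ 2) (e : ℕ) (he : 1 ≤ e) :
    Tcount (p ^ e) = (p ^ e - 2 * p ^ (e - 1) - 1) / 2 := by
  have hp_odd : Odd p := hp.odd_of_ne_two hodd
  have hp3 : 3 ≤ p := lt_of_le_of_ne hp.two_le (Ne.symm hodd)
  have hpe : p ^ e = p * p ^ (e - 1) := by rw [← pow_succ']; congr 1; omega
  rw [Tcount_eq_card_filter_range]
  simp_rw [hp.coprime_pow_right_iff_not_dvd (by omega : e ≠ 0),
    Nat.dvd_two_mul_add_one_iff_modEq hp_odd, ← Nat.modEq_zero_iff_dvd, hpe]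
  exact card_filter_range_not_modEq hp_odd hp3 hp_odd.pow
end
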